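/- Let C_cap = {x ∈ ℝ³ : ‖x‖₂ = 1, x₃ ≥ c} with c ∈ [0,1), and let ĝ be a unit vector. If ĝ₃ ≥ c, then ĝ maximizes ⟨ĝ, x⟩ over x ∈ C_cap. If ĝ₃ < c and the x-y projection ĝ_{xy} = (ĝ₁, ĝ₂) is nonzero, then the maximizer is s* = (√(1−c²)·ĝ_{xy}/‖ĝ_{xy}‖₂, c), i.e., ⟨ĝ, s*⟩ ≥ ⟨ĝ, x⟩ for all x ∈ C_cap. -/

import Mathlib

/-!
Write a point of the unit sphere as `x = (√(1 - t²) e, t)` with `e` a horizontal unit vector and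
`t = x 2` its height. By Cauchy–Schwarz in the horizontal plane,
`⟪ĝ, x⟫ ≤ √(1 - ĝ₂²) √(1 - t²) + ĝ₂ t = cos (arcsin t - arcsin ĝ₂)`, with equality when `e` points
along `ĝ_xy`. On the cap `t ≥ c > ĝ₂`, the angle `arcsin t - arcsin ĝ₂` lies in `[0, π]` and grows
with `t`, so this bound is largest on the boundary circle `t = c`, where `s*` attains it.
-/

open RealInnerProductSpace Real

namespace EuclideanSpace

lemma inner_fin_three (x y : EuclideanSpace ℝ (Fin 3)) :
    ⟪x, y⟫ = x 0 * y 0 + x 1 * y 1 + x 2 * y 2 := by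
  simp only [PiLp.inner_apply, RCLike.inner_apply, conj_trivial, Fin.sum_univ_three]
  ring

lemma norm_sq_fin_three (x : EuclideanSpace ℝ (Fin 3)) :
    ‖x‖ ^ 2 = x 0 ^ 2 + x 1 ^ 2 + x 2 ^ 2 := by
  rw [← real_inner_self_eq_norm_sq, inner_fin_three]
  ring

lemma sq_add_sq_of_norm_eq_one {x : EuclideanSpace ℝ (Fin 3)} (hx : ‖x‖ = 1) :
    x 0 ^ 2 + x 1 ^ 2 = 1 - x 2 ^ 2 := by
  linarith [norm_sq_fin_three x, hx ▸ one_pow 2]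

end EuclideanSpace

lemma mul_add_mul_le_sqrt_mul_sqrt (a b p q : ℝ) :
    a * p + b * q ≤ √(a ^ 2 + b ^ 2) * √(p ^ 2 + q ^ 2) := by
  rw [← sqrt_mul (by positivity)]
  exact (le_abs_self _).trans (abs_le_sqrt (by nlinarith [sq_nonneg (a * q - b * p)]))

lemma sqrt_mul_sqrt_add_mul_eq_cos_arcsin_sub {s t : ℝ} (hs : s ∈ Set.Icc (-1) 1)
    (ht : t ∈ Set.Icc (-1) 1) :
    √(1 - s ^ 2) * √(1 - t ^ 2) + s * t = cos (arcsin t - arcsin s) := by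
  rw [cos_sub, cos_arcsin, cos_arcsin, sin_arcsin ht.1 ht.2, sin_arcsin hs.1 hs.2]
  ring

lemma antitoneOn_sqrt_mul_sqrt_add_mul {s : ℝ} (hs : -1 ≤ s) :
    AntitoneOn (fun t ↦ √(1 - s ^ 2) * √(1 - t ^ 2) + s * t) (Set.Icc s 1) := by
  intro t ht u hu htu
  have mem : ∀ {t}, t ∈ Set.Icc s 1 → t ∈ Set.Icc (-1) 1 := fun ht ↦ ⟨hs.trans ht.1, ht.2⟩
  have hs1 : s ∈ Set.Icc (-1) 1 := ⟨hs, ht.1.trans ht.2⟩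
  simp only [sqrt_mul_sqrt_add_mul_eq_cos_arcsin_sub hs1 (mem ht),
    sqrt_mul_sqrt_add_mul_eq_cos_arcsin_sub hs1 (mem hu)]
  apply cos_le_cos_of_nonneg_of_le_pi
  · exact sub_nonneg.mpr (arcsin_le_arcsin ht.1)
  · linarith [arcsin_le_pi_div_two u, neg_pi_div_two_le_arcsin s]
  · exact sub_le_sub_right (arcsin_le_arcsin htu) _

noncomputable def alignedPoint (g : EuclideanSpace ℝ (Fin 3)) (ρ h : ℝ) :
    EuclideanSpace ℝ (Fin 3) :=
  (EuclideanSpace.equiv (Fin 3) ℝ).symm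
    ![ρ * g 0 / √(g 0 ^ 2 + g 1 ^ 2), ρ * g 1 / √(g 0 ^ 2 + g 1 ^ 2), h]

section alignedPoint

variable (g : EuclideanSpace ℝ (Fin 3)) (ρ h : ℝ)

lemma alignedPoint_apply_zero : alignedPoint g ρ h 0 = ρ * g 0 / √(g 0 ^ 2 + g 1 ^ 2) := rfl

lemma alignedPoint_apply_one : alignedPoint g ρ h 1 = ρ * g 1 / √(g 0 ^ 2 + g 1 ^ 2) := rfl

lemma alignedPoint_apply_two : alignedPoint g ρ h 2 = h := rfl

variable {g} (hg : 0 < g 0 ^ 2 + g 1 ^ 2)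
include hg

lemma norm_sq_alignedPoint : ‖alignedPoint g ρ h‖ ^ 2 = ρ ^ 2 + h ^ 2 := by
  have hr : √(g 0 ^ 2 + g 1 ^ 2) ^ 2 = g 0 ^ 2 + g 1 ^ 2 := sq_sqrt hg.le
  have hr0 : √(g 0 ^ 2 + g 1 ^ 2) ≠ 0 := (sqrt_pos.mpr hg).ne'
  rw [EuclideanSpace.norm_sq_fin_three, alignedPoint_apply_zero, alignedPoint_apply_one,
    alignedPoint_apply_two]
  field_simp
  rw [hr]
  ring

lemma inner_alignedPoint :
    ⟪g, alignedPoint g ρ h⟫ = ρ * √(g 0 ^ 2 + g 1 ^ 2) + g 2 * h := by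
  have hr : √(g 0 ^ 2 + g 1 ^ 2) ^ 2 = g 0 ^ 2 + g 1 ^ 2 := sq_sqrt hg.le
  have hr0 : √(g 0 ^ 2 + g 1 ^ 2) ≠ 0 := (sqrt_pos.mpr hg).ne'
  rw [EuclideanSpace.inner_fin_three, alignedPoint_apply_zero, alignedPoint_apply_one,
    alignedPoint_apply_two]
  field_simp
  linear_combination (-ρ) * hr

end alignedPoint

lemma inner_le_of_mem_cap {g x : EuclideanSpace ℝ (Fin 3)} {c : ℝ} (hg : ‖g‖ = 1)
    (hx : ‖x‖ = 1) (hgc : g 2 ≤ c) (hcx : c ≤ x 2) :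
    ⟪g, x⟫ ≤ √(1 - g 2 ^ 2) * √(1 - c ^ 2) + g 2 * c := by
  have hg2 : -1 ≤ g 2 := by nlinarith [EuclideanSpace.sq_add_sq_of_norm_eq_one hg]
  have hx2 : x 2 ≤ 1 := by nlinarith [EuclideanSpace.sq_add_sq_of_norm_eq_one hx]
  calc ⟪g, x⟫ = (g 0 * x 0 + g 1 * x 1) + g 2 * x 2 := EuclideanSpace.inner_fin_three g x
    _ ≤ √(g 0 ^ 2 + g 1 ^ 2) * √(x 0 ^ 2 + x 1 ^ 2) + g 2 * x 2 := by
      gcongr; exact mul_add_mul_le_sqrt_mul_sqrt _ _ _ _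
    _ = √(1 - g 2 ^ 2) * √(1 - x 2 ^ 2) + g 2 * x 2 := by
      rw [EuclideanSpace.sq_add_sq_of_norm_eq_one hg, EuclideanSpace.sq_add_sq_of_norm_eq_one hx]
    _ ≤ √(1 - g 2 ^ 2) * √(1 - c ^ 2) + g 2 * c :=
      antitoneOn_sqrt_mul_sqrt_add_mul hg2 ⟨hgc, hcx.trans hx2⟩ ⟨hgc.trans hcx, hx2⟩ hcx

theorem stmt6 (c : ℝ) (hc : c ∈ Set.Ico (0:ℝ) 1)
    (g : EuclideanSpace ℝ (Fin 3)) (hg : ‖g‖ = 1) :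
    let sstar : EuclideanSpace ℝ (Fin 3) :=
      (EuclideanSpace.equiv (Fin 3) ℝ).symm
        ![Real.sqrt (1 - c ^ 2) * g 0 / Real.sqrt (g 0 ^ 2 + g 1 ^ 2),
          Real.sqrt (1 - c ^ 2) * g 1 / Real.sqrt (g 0 ^ 2 + g 1 ^ 2), c]
    (c ≤ g 2 →
      ∀ x : EuclideanSpace ℝ (Fin 3), ‖x‖ = 1 → c ≤ x 2 → ⟪g, x⟫ ≤ ⟪g, g⟫) ∧
    (g 2 < c → ¬(g 0 = 0 ∧ g 1 = 0) →
      ‖sstar‖ = 1 ∧ c ≤ sstar 2 ∧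
        ∀ x : EuclideanSpace ℝ (Fin 3), ‖x‖ = 1 → c ≤ x 2 →
          ⟪g, x⟫ ≤ ⟪g, sstar⟫) := by
  intro sstar
  refine ⟨fun _ x hx _ ↦ ?_, fun hgc hxy ↦ ?_⟩
  · rw [real_inner_self_eq_norm_sq, hg, one_pow]
    simpa [hg, hx] using real_inner_le_norm g x
  have hg01 : 0 < g 0 ^ 2 + g 1 ^ 2 := by
    refine (by positivity : (0 : ℝ) ≤ _).lt_of_ne fun h ↦ hxy ?_
    rw [sq, sq] at h
    exact mul_self_add_mul_self_eq_zero.mp h.symm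
  have hsstar : sstar = alignedPoint g √(1 - c ^ 2) c := rfl
  have hr : √(g 0 ^ 2 + g 1 ^ 2) = √(1 - g 2 ^ 2) := by
    rw [EuclideanSpace.sq_add_sq_of_norm_eq_one hg]
  rw [hsstar, inner_alignedPoint _ _ hg01, hr, mul_comm √(1 - c ^ 2)]
  refine ⟨?_, le_rfl, fun x hx hcx ↦ inner_le_of_mem_cap hg hx hgc.le hcx⟩
  rw [← pow_eq_one_iff_of_nonneg (norm_nonneg _) two_ne_zero, norm_sq_alignedPoint _ _ hg01,
    sq_sqrt (by nlinarith [hc.1, hc.2])]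
  ring
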